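/- arXiv:cs/0605064 — 4 statements merged into one kernel-verified Lean document; each statement's English description precedes it below -/
import Mathlib

section
/- Composition table entry (dc ∘ ntpp): in any topological space, if s, t, u are non-empty regular closed sets with dc(s,t) and ntpp(t,u), then one of dc(s,u), ec(s,u), po(s,u), tpp(s,u), ntpp(s,u) holds. -/
open Set

variable {X : Type*} [TopologicalSpace X]

def RC (s : Set X) : Prop := closure (interior s) = s

def dc (s t : Set X) : Prop := s ∩ t = ∅

def ec (s t : Set X) : Prop := interior s ∩ interior t = ∅ ∧ s ∩ t ≠ ∅

def po (s t : Set X) : Prop := interior s ∩ interior t ≠ ∅ ∧ ¬ s ⊆ t ∧ ¬ t ⊆ s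

def eqr (s t : Set X) : Prop := s = t

def tpp (s t : Set X) : Prop := s ⊆ t ∧ ¬ s ⊆ interior t ∧ s ≠ t

def ntpp (s t : Set X) : Prop := s ⊆ interior t ∧ s ≠ t

def tppi (s t : Set X) : Prop := tpp t s

def ntppi (s t : Set X) : Prop := ntpp t s

theorem rcc8_comp_dc_ntpp (s t u : Set X)
    (hs : s.Nonempty) (ht : t.Nonempty) (hu : u.Nonempty)
    (hrs : RC s) (hrt : RC t) (hru : RC u)
    (h1 : dc s t) (h2 : ntpp t u) :
    dc s u ∨ ec s u ∨ po s u ∨ tpp s u ∨ ntpp s u := by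
  obtain ⟨htu, _⟩ := h2
  have hus : ¬ u ⊆ s := by
    intro h
    obtain ⟨x, hx⟩ := ht
    have : x ∈ s ∩ t := ⟨h (interior_subset (htu hx)), hx⟩
    rw [h1] at this; exact this
  by_cases hdc : s ∩ u = ∅
  · exact Or.inl hdc
  by_cases hec : interior s ∩ interior u = ∅
  · exact Or.inr (Or.inl ⟨hec, hdc⟩)
  by_cases hsu : s ⊆ u
  · have hne : s ≠ u := fun h => hus (h ▸ subset_rfl)
    by_cases hsi : s ⊆ interior u
    · exact Or.inr (Or.inr (Or.inr (Or.inr ⟨hsi, hne⟩)))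
    · exact Or.inr (Or.inr (Or.inr (Or.inl ⟨hsu, hsi, hne⟩)))
  · exact Or.inr (Or.inr (Or.inl ⟨hec, hsu, hus⟩))
end

section
/- Composition table entry (ntpp ∘ ec): in any topological space, if s, t, u are non-empty regular closed sets with ntpp(s,t) and ec(t,u), then dc(s,u). -/
open Set

variable {X : Type*} [TopologicalSpace X]

theorem rcc8_comp_ntpp_ec (s t u : Set X)
    (hs : s.Nonempty) (ht : t.Nonempty) (hu : u.Nonempty)
    (hrs : RC s) (hrt : RC t) (hru : RC u)
    (h1 : ntpp s t) (h2 : ec t u) : dc s u := by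
  ext x
  simp only [mem_inter_iff, mem_empty_iff_false, iff_false, not_and]
  intro hxs hxu
  have hxt : x ∈ interior t := h1.1 hxs
  have hxcl : x ∈ closure (interior u) := hru.symm ▸ hxu
  obtain ⟨y, hy1, hy2⟩ := mem_closure_iff.mp hxcl (interior t) isOpen_interior hxt
  exact absurd h2.1 (Nonempty.ne_empty ⟨y, hy1, hy2⟩)
end

section
/- Composition table entry (ec ∘ ntpp): in any topological space, if s, t, u are non-empty regular closed sets with ec(s,t) and ntpp(t,u), then po(s,u), tpp(s,u), or ntpp(s,u) holds. -/
open Set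

variable {X : Type*} [TopologicalSpace X]

theorem rcc8_comp_ec_ntpp (s t u : Set X)
    (hs : s.Nonempty) (ht : t.Nonempty) (hu : u.Nonempty)
    (hrs : RC s) (hrt : RC t) (hru : RC u)
    (h1 : ec s t) (h2 : ntpp t u) : po s u ∨ tpp s u ∨ ntpp s u := by
  obtain ⟨hdis, hmeet⟩ := h1
  obtain ⟨htu, htne⟩ := h2
  -- interior t is nonempty
  have hintt : (interior t).Nonempty := by
    rcases ht with ⟨y, hy⟩
    by_contra h
    rw [Set.not_nonempty_iff_eq_empty] at h
    have : t = ∅ := by rw [← hrt, h, closure_empty]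
    exact absurd (this ▸ hy) (Set.notMem_empty y)
  -- pick x ∈ s ∩ t
  obtain ⟨x, hxs, hxt⟩ := Set.nonempty_iff_ne_empty.mpr hmeet
  have hxu : x ∈ interior u := htu hxt
  -- int s ∩ int u nonempty: x ∈ s = closure (interior s), int u open nbhd of x
  have hsu : (interior s ∩ interior u).Nonempty := by
    have hxcl : x ∈ closure (interior s) := by rw [hrs]; exact hxs
    have := (mem_closure_iff.mp hxcl) (interior u) isOpen_interior hxu
    rcases this with ⟨z, hz1, hz2⟩
    exact ⟨z, hz2, hz1⟩
  -- s ≠ u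
  have hne : s ≠ u := by
    intro h
    subst h
    obtain ⟨z, hz⟩ := hintt
    have : z ∈ interior s ∩ interior t := ⟨interior_mono (htu.trans interior_subset) hz, hz⟩
    rw [hdis] at this
    exact this
  by_cases hsub : s ⊆ u
  · by_cases hsint : s ⊆ interior u
    · exact Or.inr (Or.inr ⟨hsint, hne⟩)
    · exact Or.inr (Or.inl ⟨hsub, hsint, hne⟩)
  · left
    refine ⟨Set.nonempty_iff_ne_empty.mp hsu, hsub, ?_⟩
    intro hus
    obtain ⟨z, hz⟩ := hintt
    have : z ∈ interior s ∩ interior t :=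
      ⟨interior_mono (htu.trans (interior_subset.trans hus)) hz, hz⟩
    rw [hdis] at this
    exact this
end

section
/- The RCC8 constraint network ec[2ⁿ+1], consisting of 2ⁿ+1 hyper-rectangles in ℝⁿ that are pairwise externally connected, is not satisfiable: there do not exist 2ⁿ+1 closed hyper-rectangles in ℝⁿ (products of non-degenerate closed intervals) that are pairwise externally connected. Prove this for n = 1: there do not exist three non-degenerate closed intervals in ℝ that are pairwise externally connected. -/
open Set

def ecR (s t : Set ℝ) : Prop := interior s ∩ interior t = ∅ ∧ s ∩ t ≠ ∅

lemma ec_cases (a b c d : ℝ) (hab : a < b) (hcd : c < d)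
    (h : ecR (Icc a b) (Icc c d)) : b = c ∨ d = a := by
  obtain ⟨hdis, hint⟩ := h
  rw [interior_Icc, interior_Icc] at hdis
  obtain ⟨x, ⟨hx1, hx2⟩, hx3, hx4⟩ := nonempty_iff_ne_empty.2 hint
  have key : b ≤ c ∨ d ≤ a := by
    by_contra hk
    push_neg at hk
    obtain ⟨h1, h2⟩ := hk
    have hy1 : max a c < min b d := by
      simp only [lt_min_iff, max_lt_iff]
      exact ⟨⟨hab, h1⟩, ⟨h2, hcd⟩⟩
    have hm1 : a ≤ max a c := le_max_left _ _
    have hm2 : c ≤ max a c := le_max_right _ _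
    have hm3 : min b d ≤ b := min_le_left _ _
    have hm4 : min b d ≤ d := min_le_right _ _
    have : (max a c + min b d)/2 ∈ Ioo a b ∩ Ioo c d := by
      exact ⟨⟨by linarith, by linarith⟩, by linarith, by linarith⟩
    rw [hdis] at this
    exact this
  rcases key with h' | h'
  · left; linarith
  · right; linarith

theorem no_three_pairwise_ec_intervals :
    ¬ ∃ a₁ b₁ a₂ b₂ a₃ b₃ : ℝ, a₁ < b₁ ∧ a₂ < b₂ ∧ a₃ < b₃ ∧
      ecR (Icc a₁ b₁) (Icc a₂ b₂) ∧ ecR (Icc a₁ b₁) (Icc a₃ b₃) ∧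
      ecR (Icc a₂ b₂) (Icc a₃ b₃) := by
  rintro ⟨a₁, b₁, a₂, b₂, a₃, b₃, h1, h2, h3, e12, e13, e23⟩
  rcases ec_cases _ _ _ _ h1 h2 e12 with h12 | h12 <;>
  rcases ec_cases _ _ _ _ h1 h3 e13 with h13 | h13 <;>
  rcases ec_cases _ _ _ _ h2 h3 e23 with h23 | h23 <;> linarith
end
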